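/- Every clean compact peg permutation π^ε of length n ≥ 2 contains at least one peg pattern γ^δ of length n−1 which is clean compact as well. -/

import Mathlib

/-! ## Basic definitions: permutations as lists, reversals, distances -/

/-- Decorations for peg permutations: `+`, `-`, `•`. -/
inductive Deco where
  | plus : Deco
  | minus : Deco
  | dot : Deco
deriving DecidableEq, Repr

/-- A peg permutation: a list of entries together with decorations. -/
abbrev PegPerm := List (ℕ × Deco)

def pegDefault : ℕ × Deco := (0, Deco.dot)

/-- The identity permutation `1 2 ⋯ n` as a list. -/
def idPerm (n : ℕ) : List ℕ := List.range' 1 n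

/-- A list of naturals is a permutation (of `1,…,n` where `n` is its length). -/
def IsPermList (π : List ℕ) : Prop := π.Perm (idPerm π.length)

/-- Reverse the segment of a list from (0-indexed) position `i` to `j` inclusive. -/
def segReverse {α : Type*} (l : List α) (i j : ℕ) : List α :=
  l.take i ++ ((l.drop i).take (j + 1 - i)).reverse ++ l.drop (j + 1)

/-- One reversal step on permutations (reverse a segment of length at least 2). -/
def RevStep (l l' : List ℕ) : Prop :=
  ∃ i j, i < j ∧ j < l.length ∧ l' = segReverse l i j

/-- One prefix reversal step on permutations (reverse a prefix of length at least 2). -/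
def PrefRevStep (l l' : List ℕ) : Prop :=
  ∃ j, 0 < j ∧ j < l.length ∧ l' = segReverse l 0 j

/-- Reachability in exactly `k` steps of the step relation `step`. -/
def ReachIn {α : Type*} (step : α → α → Prop) : ℕ → α → α → Prop
  | 0, x, y => x = y
  | k + 1, x, y => ∃ z, step x z ∧ ReachIn step k z y

/-- The reversal distance of a permutation from the identity. -/
noncomputable def rd (π : List ℕ) : ℕ :=
  sInf {k | ReachIn RevStep k π (idPerm π.length)}

/-- The prefix reversal distance of a permutation from the identity. -/
noncomputable def prd (π : List ℕ) : ℕ :=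
  sInf {k | ReachIn PrefRevStep k π (idPerm π.length)}

/-- The ball of radius `k` in the reversal model. -/
def Brd (k : ℕ) : Set (List ℕ) := {π | IsPermList π ∧ rd π ≤ k}

/-- The ball of radius `k` in the prefix reversal model. -/
def Bprd (k : ℕ) : Set (List ℕ) := {π | IsPermList π ∧ prd π ≤ k}

/-! ## Peg permutations: oriented reversals and distances -/

def flipDeco : Deco → Deco
  | Deco.plus => Deco.minus
  | Deco.minus => Deco.plus
  | Deco.dot => Deco.dot

/-- Oriented reversal of the segment from position `i` to `j` (0-indexed) of a peg
permutation: the segment is reversed and the decorations `+`, `-` are swapped. -/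
def pegSegReverse (l : PegPerm) (i j : ℕ) : PegPerm :=
  l.take i ++ (((l.drop i).take (j + 1 - i)).map (fun p => (p.1, flipDeco p.2))).reverse
    ++ l.drop (j + 1)

/-- One oriented reversal step on peg permutations. -/
def PegRevStep (l l' : PegPerm) : Prop :=
  ∃ i j, i ≤ j ∧ j < l.length ∧ l' = pegSegReverse l i j

/-- One oriented prefix reversal step on peg permutations. -/
def PegPrefRevStep (l l' : PegPerm) : Prop :=
  ∃ j, j < l.length ∧ l' = pegSegReverse l 0 j

/-- The underlying list of a peg permutation is a permutation. -/
def IsPegPermList (l : PegPerm) : Prop := IsPermList (l.map Prod.fst)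

/-- An identity peg permutation: underlying identity, every decoration `+` or `•`. -/
def IsIdPeg (l : PegPerm) : Prop :=
  l.map Prod.fst = idPerm l.length ∧ ∀ p ∈ l, p.2 ≠ Deco.minus

/-- The reversal distance of a peg permutation from an identity peg permutation. -/
noncomputable def pegRd (l : PegPerm) : ℕ :=
  sInf {k | ∃ m, IsIdPeg m ∧ ReachIn PegRevStep k l m}

/-- The prefix reversal distance of a peg permutation from an identity peg permutation. -/
noncomputable def pegPrd (l : PegPerm) : ℕ :=
  sInf {k | ∃ m, IsIdPeg m ∧ ReachIn PegPrefRevStep k l m}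

/-- The ball of radius `k` of peg permutations in the reversal model. -/
def PegBrd (k : ℕ) : Set PegPerm := {l | IsPegPermList l ∧ pegRd l ≤ k}

/-- The ball of radius `k` of peg permutations in the prefix reversal model. -/
def PegBprd (k : ℕ) : Set PegPerm := {l | IsPegPermList l ∧ pegPrd l ≤ k}

/-! ## Patterns -/

/-- Two lists of the same length are order-isomorphic. -/
def OrderIsoList (s t : List ℕ) : Prop :=
  s.length = t.length ∧
  ∀ i j, i < s.length → j < s.length → (s.getD i 0 < s.getD j 0 ↔ t.getD i 0 < t.getD j 0)

/-- `σ` is a (classical) pattern of `τ`. -/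
def IsPattern (σ τ : List ℕ) : Prop :=
  ∃ s, s.Sublist τ ∧ OrderIsoList s σ

/-- `σ` is a peg pattern of `τ`: some subsequence of `τ` is order-isomorphic to `σ`
and whenever an entry of the subsequence is decorated `+` (resp. `-`), the
corresponding entry of `σ` is decorated `+` (resp. `-`). -/
def IsPegPattern (σ τ : PegPerm) : Prop :=
  ∃ s : PegPerm, s.Sublist τ ∧ OrderIsoList (s.map Prod.fst) (σ.map Prod.fst) ∧
    ∀ i, i < s.length →
      ((s.getD i pegDefault).2 = Deco.plus → (σ.getD i pegDefault).2 = Deco.plus) ∧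
      ((s.getD i pegDefault).2 = Deco.minus → (σ.getD i pegDefault).2 = Deco.minus)

/-! ## Strips, clean compact and compact peg permutations -/

/-- Two adjacent entries of a peg permutation lie in a common strip. -/
def StripPair (p q : ℕ × Deco) : Prop :=
  (q.1 = p.1 + 1 ∧ p.2 ≠ Deco.minus ∧ q.2 ≠ Deco.minus) ∨
  (p.1 = q.1 + 1 ∧ p.2 ≠ Deco.plus ∧ q.2 ≠ Deco.plus)

/-- A peg permutation is clean compact when all its strips have length 1, i.e. no two
adjacent entries lie in a common strip. -/
def CleanCompact (l : PegPerm) : Prop :=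
  ∀ i, i + 1 < l.length → ¬ StripPair (l.getD i pegDefault) (l.getD (i + 1) pegDefault)

/-- A peg permutation is compact when every strip has length 1 or consists
exclusively of entries decorated `•`. -/
def CompactPeg (l : PegPerm) : Prop :=
  ∀ i, i + 1 < l.length → StripPair (l.getD i pegDefault) (l.getD (i + 1) pegDefault) →
    (l.getD i pegDefault).2 = Deco.dot ∧ (l.getD (i + 1) pegDefault).2 = Deco.dot

/-! ## The clean compact peg permutation `peg(γ)` associated with a permutation -/

/-- The decomposition of a permutation into maximal monotone strips of adjacent values. -/
def stripGroups (γ : List ℕ) : List (List ℕ) :=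
  γ.splitBy (fun a b => b == a + 1 || a == b + 1)

def stripMin (s : List ℕ) : ℕ := s.foldr min (s.headD 0)

def stripDeco (s : List ℕ) : Deco :=
  if s.length ≤ 1 then Deco.dot
  else if s.headD 0 < s.getLastD 0 then Deco.plus
  else Deco.minus

/-- Rank of `v` among `vals` (used for rescaling). -/
def rankIn (vals : List ℕ) (v : ℕ) : ℕ := (vals.filter (fun w => w ≤ v)).length

/-- The clean compact peg permutation associated with a permutation: replace each
strip by its minimum, decorated `+`/`-`/`•` according to the kind of strip, and rescale. -/
def pegOf (γ : List ℕ) : PegPerm :=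
  (stripGroups γ).map (fun s => (rankIn ((stripGroups γ).map stripMin) (stripMin s), stripDeco s))

/-! ## Monotone inflations and grid classes -/

/-- A legal inflation vector for a peg permutation. -/
def LegalVec (πε : PegPerm) (v : List ℕ) : Prop :=
  v.length = πε.length ∧
  ∀ i, i < πε.length → (πε.getD i pegDefault).2 = Deco.dot → v.getD i 0 ≤ 1

/-- The values of the `i`-th block of the monotone inflation of `πε` through `v`:
an increasing (resp. decreasing) run of `vᵢ` values, occupying the interval of values
determined by the relative order of the entries of `πε`. -/
def blockVals (πε : PegPerm) (v : List ℕ) (i : ℕ) : List ℕ :=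
  let off := (((List.range πε.length).filter
      (fun j => (πε.getD j pegDefault).1 < (πε.getD i pegDefault).1)).map
      (fun j => v.getD j 0)).sum
  if (πε.getD i pegDefault).2 = Deco.minus then (List.range' (off + 1) (v.getD i 0)).reverse
  else List.range' (off + 1) (v.getD i 0)

/-- The monotone inflation `πε[v]`. -/
def inflate (πε : PegPerm) (v : List ℕ) : List ℕ :=
  ((List.range πε.length).map (blockVals πε v)).flatten

/-- The grid class of a peg permutation: all its monotone inflations through legal
inflation vectors. -/
def GridOf (πε : PegPerm) : Set (List ℕ) :=
  {γ | ∃ v, LegalVec πε v ∧ γ = inflate πε v}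

/-- Compatibility of decorations in peg monotone inflations: a `+` entry is inflated by
an identity peg permutation (decorations `+`/`•`), a `-` entry by a reverse identity peg
permutation (decorations `-`/`•`), a `•` entry stays `•`. -/
def DecoOK : Deco → Deco → Prop
  | Deco.plus, d => d ≠ Deco.minus
  | Deco.minus, d => d ≠ Deco.plus
  | Deco.dot, d => d = Deco.dot

/-- The peg grid class of a peg permutation: all its peg monotone inflations. -/
def GridPegOf (πε : PegPerm) : Set PegPerm :=
  {γ | ∃ v, LegalVec πε v ∧ ∃ bs : List PegPerm,
    bs.length = πε.length ∧ γ = bs.flatten ∧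
    ∀ i, i < πε.length →
      (bs.getD i []).map Prod.fst = blockVals πε v i ∧
      ∀ p ∈ bs.getD i [], DecoOK (πε.getD i pegDefault).2 p.2}

/-! ## The inflation `π^ε_I` and the permutation `π̃^ε_I` -/

/-- Canonical peg inflation: every inflated entry keeps the decoration of the
original one. -/
def pegInflate (πε : PegPerm) (v : List ℕ) : PegPerm :=
  ((List.range πε.length).map
    (fun i => (blockVals πε v i).map (fun x => (x, (πε.getD i pegDefault).2)))).flatten

/-- The inflation vector associated with the multiset `I = {i, j}` (0-indexed):
entries `i` and `j` are inflated by one more element each. -/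
def inflVec (n i j : ℕ) : List ℕ :=
  (List.range n).map (fun l => 1 + (if l = i then 1 else 0) + (if l = j then 1 else 0))

/-- `π^ε_I` where `I = {i, j}` with `i ≤ j` 0-indexed. -/
def pegI (πε : PegPerm) (i j : ℕ) : PegPerm := pegInflate πε (inflVec πε.length i j)

/-- `π̃^ε_I`: the result of applying to `π^ε_I` the oriented reversal of the segment
of (0-indexed) positions `i+1, …, j+1`. -/
def pegITilde (πε : PegPerm) (i j : ℕ) : PegPerm := pegSegReverse (pegI πε i j) (i + 1) (j + 1)

/-! ## Clean compact peg bases -/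

/-- The clean compact peg basis of a set `B` of peg permutations: the clean compact
peg permutations not in `B` all of whose proper clean compact peg patterns are in `B`. -/
def CCPegBasis (B : Set PegPerm) : Set PegPerm :=
  {πε | IsPegPermList πε ∧ CleanCompact πε ∧ πε ∉ B ∧
    ∀ γ, IsPegPermList γ → CleanCompact γ → IsPegPattern γ πε → γ ≠ πε → γ ∈ B}

/-! ## The exceptional peg permutations for the prefix reversal model -/

/-- `Θ_e(n)` for even `n`:  `n• (n−2)• ⋯ 4• 2• 1⁺ 3• ⋯ (n−3)• (n−1)•`. -/
def ThetaE (n : ℕ) : PegPerm :=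
  ((List.range (n / 2)).map (fun i => (n - 2 * i, Deco.dot))) ++ [(1, Deco.plus)] ++
  ((List.range (n / 2 - 1)).map (fun i => (3 + 2 * i, Deco.dot)))

/-- `Θ_o(n)` for odd `n`:  `n• (n−2)• ⋯ 3• 1⁻ 2• 4• ⋯ (n−3)• (n−1)•`. -/
def ThetaO (n : ℕ) : PegPerm :=
  ((List.range ((n - 1) / 2)).map (fun i => (n - 2 * i, Deco.dot))) ++ [(1, Deco.minus)] ++
  ((List.range ((n - 1) / 2)).map (fun i => (2 + 2 * i, Deco.dot)))

/-- `Λ_e(n)` for even `n` and `t = n/2`:  `(t+1)⁺ t• (t+2)• (t−1)• ⋯ (n−1)• 2• n• 1•`. -/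
def LambdaE (n : ℕ) : PegPerm :=
  (List.range (n / 2)).flatMap
    (fun i => [(n / 2 + 1 + i, if i = 0 then Deco.plus else Deco.dot), (n / 2 - i, Deco.dot)])

/-- `Λ_o(n)` for odd `n` and `t = (n+1)/2`:  `t⁻ (t+1)• (t−1)• (t+2)• ⋯ (n−1)• 2• n• 1•`. -/
def LambdaO (n : ℕ) : PegPerm :=
  ((n + 1) / 2, Deco.minus) ::
    (List.range ((n + 1) / 2 - 1)).flatMap
      (fun i => [((n + 1) / 2 + 1 + i, Deco.dot), ((n + 1) / 2 - 1 - i, Deco.dot)])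

/-!
Delete the largest entry `n`. Deleting an entry of value `u` can only create a strip between its
two neighbours in position, or between the entries of values `u - 1` and `u + 1`; for `u = n`
only the first can happen, and if one of the two neighbours is decorated `•` it can be
redecorated so that they form no strip. Otherwise the neighbours are `a⁺ n (a+1)⁺` or
`(a+1)⁻ n a⁻`, and deleting `a` instead works, unless the entry on the far side of `a` is
`n - 1`, decorated like `n` so that the two would form a strip; then deleting `a + 1` works.
-/

section
local notation:max l "⟪" i "⟫" => List.getD l i pegDefault

lemma isPermList_iff {l : List ℕ} : IsPermList l ↔ l.Nodup ∧ ∀ x ∈ l, 1 ≤ x ∧ x ≤ l.length := by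
  unfold IsPermList idPerm
  refine ⟨fun h => ⟨h.nodup_iff.2 List.nodup_range', fun x hx => ?_⟩, fun ⟨hnd, hmem⟩ => ?_⟩
  · have := List.mem_range'_1.1 (h.subset hx)
    omega
  · refine (List.subperm_of_subset hnd fun x hx => ?_).perm_of_length_le (by simp)
    have := hmem x hx
    exact List.mem_range'_1.2 (by omega)

lemma List.getD_map_of_lt {α β : Type*} (f : α → β) {l : List α} {i : ℕ} (hi : i < l.length)
    (d : α) (d' : β) : (l.map f).getD i d' = f (l.getD i d) := by
  simp [List.getD_eq_getElem?_getD, hi]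

lemma List.getD_eraseIdx {α : Type*} (l : List α) (t i : ℕ) (d : α) :
    (l.eraseIdx t).getD i d = l.getD (if i < t then i else i + 1) d := by
  simp only [List.getD_eq_getElem?_getD, List.getElem?_eraseIdx]
  split_ifs <;> rfl

lemma Deco.eq_plus_of_ne {d : Deco} (h1 : d ≠ Deco.minus) (h2 : d ≠ Deco.dot) :
    d = Deco.plus := by
  cases d <;> simp_all

lemma Deco.eq_minus_of_ne {d : Deco} (h1 : d ≠ Deco.plus) (h2 : d ≠ Deco.dot) :
    d = Deco.minus := by
  cases d <;> simp_all

def rescale (u x : ℕ) : ℕ := if u < x then x - 1 else x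

lemma rescale_of_le {u x : ℕ} (h : x ≤ u) : rescale u x = x := if_neg (by omega)

lemma rescale_lt_rescale_iff {u x y : ℕ} (hx : x ≠ u) (hy : y ≠ u) :
    rescale u x < rescale u y ↔ x < y := by
  unfold rescale; split_ifs <;> omega

lemma stripPair_of_stripPair_rescale {u a b : ℕ} {d e : Deco} (ha : a ≠ u) (hb : b ≠ u)
    (h : StripPair (rescale u a, d) (rescale u b, e)) :
    StripPair (a, d) (b, e) ∨ (a + 1 = u ∧ b = u + 1 ∧ d ≠ Deco.minus ∧ e ≠ Deco.minus) ∨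
      (a = u + 1 ∧ b + 1 = u ∧ d ≠ Deco.plus ∧ e ≠ Deco.plus) := by
  unfold StripPair rescale at *
  split_ifs at h <;> grind

lemma StripPair.of_specialize {a b : ℕ} {d d' e e' : Deco} (hd : d' = d ∨ d = Deco.dot)
    (he : e' = e ∨ e = Deco.dot) (h : StripPair (a, d') (b, e')) : StripPair (a, d) (b, e) := by
  unfold StripPair at *
  rcases hd with rfl | rfl <;> rcases he with rfl | rfl <;> grind

namespace IsPegPermList

variable {π : PegPerm}

lemma bounds (h : IsPegPermList π) {i : ℕ} (hi : i < π.length) :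
    1 ≤ π⟪i⟫.1 ∧ π⟪i⟫.1 ≤ π.length := by
  rw [List.getD_eq_getElem _ _ hi]
  simpa using (isPermList_iff.1 h).2 _ (List.mem_map_of_mem (List.getElem_mem hi))

lemma injective (h : IsPegPermList π) {i j : ℕ} (hi : i < π.length) (hj : j < π.length)
    (hij : π⟪i⟫.1 = π⟪j⟫.1) : i = j := by
  have hnd := (isPermList_iff.1 h).1
  rw [List.getD_eq_getElem _ _ hi, List.getD_eq_getElem _ _ hj] at hij
  exact (hnd.getElem_inj_iff (hi := by simpa) (hj := by simpa)).1 (by simpa using hij)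

lemma fst_ne (h : IsPegPermList π) {i j : ℕ} (hi : i < π.length) (hj : j < π.length)
    (hij : i ≠ j) : π⟪i⟫.1 ≠ π⟪j⟫.1 :=
  fun h' => hij (h.injective hi hj h')

lemma exists_getD_eq (h : IsPegPermList π) {v : ℕ} (h1 : 1 ≤ v) (h2 : v ≤ π.length) :
    ∃ i < π.length, π⟪i⟫.1 = v := by
  have hv : v ∈ π.map Prod.fst := h.mem_iff.2 (List.mem_range'_1.2 (by simp; omega))
  obtain ⟨i, hi, hiv⟩ := List.mem_iff_getElem.1 hv
  rw [List.length_map] at hi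
  exact ⟨i, hi, by rw [List.getD_eq_getElem _ _ hi]; simpa using hiv⟩

lemma fst_of_mem_eraseIdx (h0 : IsPegPermList π) {t : ℕ} (ht : t < π.length)
    {p : ℕ × Deco} (hp : p ∈ π.eraseIdx t) : p.1 ≠ π⟪t⟫.1 ∧ 1 ≤ p.1 ∧ p.1 ≤ π.length := by
  obtain ⟨i, hi, hit, rfl⟩ := List.mem_eraseIdx_iff_getElem.1 hp
  have hb := h0.bounds hi
  rw [List.getD_eq_getElem _ _ hi] at hb
  exact ⟨fun he => hit (h0.injective hi ht (by rwa [List.getD_eq_getElem _ _ hi])), hb⟩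

end IsPegPermList

def eraseStd (π : PegPerm) (t : ℕ) (spec : ℕ × Deco → Deco) : PegPerm :=
  (π.eraseIdx t).map fun p => (rescale π⟪t⟫.1 p.1, spec p)

section eraseStd

variable {π : PegPerm} {t : ℕ} {spec : ℕ × Deco → Deco}

lemma length_eraseStd (ht : t < π.length) : (eraseStd π t spec).length = π.length - 1 := by
  simp [eraseStd, List.length_eraseIdx, ht]

lemma getD_eraseStd {i : ℕ} (hi : i + 1 < π.length) :
    (eraseStd π t spec)⟪i⟫ = (rescale π⟪t⟫.1 π⟪if i < t then i else i + 1⟫.1,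
      spec π⟪if i < t then i else i + 1⟫) := by
  rw [eraseStd, List.getD_map_of_lt _ (by rw [List.length_eraseIdx]; split_ifs <;> omega)
    pegDefault, List.getD_eraseIdx]

lemma isPegPermList_eraseStd (h0 : IsPegPermList π) (ht : t < π.length) :
    IsPegPermList (eraseStd π t spec) := by
  have hu := h0.bounds ht
  rw [IsPegPermList, isPermList_iff, List.length_map, length_eraseStd ht, eraseStd, List.map_map]
  refine ⟨List.Nodup.map_on (fun p hp q hq hpq => ?_) ?_, ?_⟩
  · have hp' := h0.fst_of_mem_eraseIdx ht hp
    have hq' := h0.fst_of_mem_eraseIdx ht hq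
    refine List.inj_on_of_nodup_map (isPermList_iff.1 h0).1 (List.eraseIdx_subset hp)
      (List.eraseIdx_subset hq) ?_
    simp only [Function.comp_apply, rescale] at hpq
    split_ifs at hpq <;> omega
  · exact ((isPermList_iff.1 h0).1.of_map _).eraseIdx t
  · simp only [List.mem_map, Function.comp_apply, forall_exists_index, and_imp]
    rintro _ p hp rfl
    have := h0.fst_of_mem_eraseIdx ht hp
    unfold rescale
    split_ifs <;> omega

lemma isPegPattern_eraseStd (h0 : IsPegPermList π) (ht : t < π.length)
    (hspec : ∀ p, spec p = p.2 ∨ p.2 = Deco.dot) : IsPegPattern (eraseStd π t spec) π := by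
  have hget : ∀ i < (π.eraseIdx t).length,
      (eraseStd π t spec)⟪i⟫ = (rescale π⟪t⟫.1 (π.eraseIdx t)⟪i⟫.1, spec (π.eraseIdx t)⟪i⟫) :=
    fun i hi => List.getD_map_of_lt _ hi pegDefault pegDefault
  have hne : ∀ i < (π.eraseIdx t).length, (π.eraseIdx t)⟪i⟫.1 ≠ π⟪t⟫.1 := fun i hi =>
    (h0.fst_of_mem_eraseIdx ht (by rw [List.getD_eq_getElem _ _ hi]; exact List.getElem_mem hi)).1
  refine ⟨π.eraseIdx t, List.eraseIdx_sublist _ _, ⟨by simp [eraseStd], fun i j hi hj => ?_⟩,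
    fun i hi => ?_⟩
  · rw [List.length_map] at hi hj
    rw [List.getD_map_of_lt _ hi pegDefault, List.getD_map_of_lt _ hj pegDefault,
      List.getD_map_of_lt _ (by simpa [eraseStd] using hi) pegDefault,
      List.getD_map_of_lt _ (by simpa [eraseStd] using hj) pegDefault, hget i hi, hget j hj]
    exact (rescale_lt_rescale_iff (hne i hi) (hne j hj)).symm
  · rw [hget i hi]
    rcases hspec (π.eraseIdx t)⟪i⟫ with h | h <;> rw [h] <;> simp

lemma cleanCompact_eraseStd (ht : t < π.length)
    (hjoin : ∀ s, s + 1 = t → s + 2 < π.length →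
      ¬ StripPair (rescale π⟪t⟫.1 π⟪s⟫.1, spec π⟪s⟫)
        (rescale π⟪t⟫.1 π⟪s + 2⟫.1, spec π⟪s + 2⟫))
    (hrest : ∀ i, i + 1 < π.length → i ≠ t → i + 1 ≠ t →
      ¬ StripPair (rescale π⟪t⟫.1 π⟪i⟫.1, spec π⟪i⟫)
        (rescale π⟪t⟫.1 π⟪i + 1⟫.1, spec π⟪i + 1⟫)) :
    CleanCompact (eraseStd π t spec) := by
  intro i hi
  rw [length_eraseStd ht] at hi
  rw [getD_eraseStd (by omega), getD_eraseStd (by omega)]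
  rcases lt_trichotomy (i + 1) t with h | h | h
  · rw [if_pos (by omega), if_pos h]
    exact hrest i (by omega) (by omega) (by omega)
  · rw [if_pos (by omega), if_neg (by omega)]
    exact hjoin i h (by omega)
  · rw [if_neg (by omega), if_neg (by omega)]
    exact hrest (i + 1) (by omega) (by omega) (by omega)

end eraseStd

lemma not_stripPair_of_eq_ite {a b : ℕ} {d e : Deco}
    (h : d = (if b = a + 1 then Deco.minus else Deco.plus) ∨
      e = (if b = a + 1 then Deco.minus else Deco.plus)) :
    ¬ StripPair (a, d) (b, e) := by
  unfold StripPair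
  split_ifs at h <;> rcases h with rfl | rfl <;> simp <;> omega

lemma exists_specialize_not_stripPair (p q : ℕ × Deco) (a b : ℕ)
    (h : StripPair (a, p.2) (b, q.2) → p.2 = Deco.dot ∨ q.2 = Deco.dot) :
    ∃ spec : ℕ × Deco → Deco, (∀ r, spec r = r.2 ∨ r.2 = Deco.dot) ∧
      ¬ StripPair (a, spec p) (b, spec q) := by
  by_cases hs : StripPair (a, p.2) (b, q.2)
  · obtain ⟨r, hr, hrd⟩ : ∃ r, (r = p ∨ r = q) ∧ r.2 = Deco.dot :=
      (h hs).elim (fun hp => ⟨p, Or.inl rfl, hp⟩) (fun hq => ⟨q, Or.inr rfl, hq⟩)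
    refine ⟨Function.update Prod.snd r (if b = a + 1 then Deco.minus else Deco.plus),
      fun x => ?_, not_stripPair_of_eq_ite ?_⟩
    · by_cases hx : x = r
      · exact Or.inr (hx ▸ hrd)
      · exact Or.inl (Function.update_of_ne hx _ _)
    · rcases hr with rfl | rfl <;> simp
  · exact ⟨Prod.snd, fun _ => Or.inl rfl, hs⟩

variable {π : PegPerm}

/-- Deleting the entry at position `t` creates two new adjacencies: positions `t - 1`, `t + 1`
(`hjoin`: a strip there must contain a `•`, which is then redecorated) and values `u - 1`,
`u + 1` (`hinc`, `hdec`: no strip). -/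
theorem exists_cleanCompact_pattern_of_erase {t u : ℕ} (h0 : IsPegPermList π)
    (h1 : CleanCompact π) (ht : t < π.length) (hu : π⟪t⟫.1 = u)
    (hjoin : ∀ s, s + 1 = t → s + 2 < π.length →
      StripPair (rescale u π⟪s⟫.1, π⟪s⟫.2) (rescale u π⟪s + 2⟫.1, π⟪s + 2⟫.2) →
        π⟪s⟫.2 = Deco.dot ∨ π⟪s + 2⟫.2 = Deco.dot)
    (hinc : ∀ i, i + 1 < π.length → π⟪i⟫.1 + 1 = u → π⟪i + 1⟫.1 = u + 1 →
      π⟪i⟫.2 = Deco.minus ∨ π⟪i + 1⟫.2 = Deco.minus)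
    (hdec : ∀ i, i + 1 < π.length → π⟪i⟫.1 = u + 1 → π⟪i + 1⟫.1 + 1 = u →
      π⟪i⟫.2 = Deco.plus ∨ π⟪i + 1⟫.2 = Deco.plus) :
    ∃ γ, IsPegPermList γ ∧ CleanCompact γ ∧ γ.length = π.length - 1 ∧ IsPegPattern γ π := by
  subst hu
  have hrest : ∀ i, i + 1 < π.length → i ≠ t → i + 1 ≠ t →
      ¬ StripPair (rescale π⟪t⟫.1 π⟪i⟫.1, π⟪i⟫.2) (rescale π⟪t⟫.1 π⟪i + 1⟫.1, π⟪i + 1⟫.2) := by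
    intro i hi hit hit1 hs
    rcases stripPair_of_stripPair_rescale (h0.fst_ne (by omega) ht hit)
      (h0.fst_ne hi ht hit1) hs with hs | ⟨hv1, hv2, hd, he⟩ | ⟨hv1, hv2, hd, he⟩
    · exact h1 i hi hs
    · rcases hinc i hi hv1 hv2 with h | h <;> contradiction
    · rcases hdec i hi hv1 hv2 with h | h <;> contradiction
  obtain ⟨spec, hspec, hjoin'⟩ : ∃ spec : ℕ × Deco → Deco,
      (∀ r, spec r = r.2 ∨ r.2 = Deco.dot) ∧ ∀ s, s + 1 = t → s + 2 < π.length →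
        ¬ StripPair (rescale π⟪t⟫.1 π⟪s⟫.1, spec π⟪s⟫)
          (rescale π⟪t⟫.1 π⟪s + 2⟫.1, spec π⟪s + 2⟫) := by
    by_cases hj : ∃ s, s + 1 = t ∧ s + 2 < π.length
    · obtain ⟨s, rfl, hs⟩ := hj
      obtain ⟨spec, hspec, h⟩ := exists_specialize_not_stripPair _ _ _ _ (hjoin s rfl hs)
      refine ⟨spec, hspec, fun s' hs' _ => ?_⟩
      obtain rfl : s' = s := by omega
      exact h
    · exact ⟨Prod.snd, fun _ => Or.inl rfl, fun s hs hs2 => (hj ⟨s, hs, hs2⟩).elim⟩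
  exact ⟨eraseStd π t spec, isPegPermList_eraseStd h0 ht,
    cleanCompact_eraseStd ht hjoin' fun i hi hit hit1 hs =>
      hrest i hi hit hit1 (StripPair.of_specialize (hspec _) (hspec _) hs),
    length_eraseStd ht, isPegPattern_eraseStd h0 ht hspec⟩

theorem exists_cleanCompact_pattern_of_increasing_around_max (h0 : IsPegPermList π)
    (h1 : CleanCompact π) {i : ℕ} (hi : i + 2 < π.length) (hmax : π⟪i + 1⟫.1 = π.length)
    (hv : π⟪i + 2⟫.1 = π⟪i⟫.1 + 1) (hr : π⟪i + 2⟫.2 = Deco.plus) :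
    ∃ γ, IsPegPermList γ ∧ CleanCompact γ ∧ γ.length = π.length - 1 ∧ IsPegPattern γ π := by
  have hne₁₂ := h0.fst_ne (i := i + 1) (j := i + 2) (by omega) hi (by omega)
  have hb₂ := h0.bounds hi
  by_cases hfar : ∃ s, s + 1 = i ∧ π⟪s⟫.1 + 1 = π.length ∧ π⟪s⟫.2 = Deco.plus ∧
      π⟪i + 1⟫.2 = Deco.plus
  · obtain ⟨s, hs, hsv, hsd, hd⟩ := hfar
    have hne := h0.fst_ne (i := s) (j := i + 2) (by omega) hi (by omega)
    refine exists_cleanCompact_pattern_of_erase h0 h1 hi rfl ?_ ?_ ?_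
    · rintro s' hs' hs2 hstrip
      obtain rfl : s' = i + 1 := by omega
      have := h0.bounds hs2
      rcases stripPair_of_stripPair_rescale hne₁₂ (h0.fst_ne hs2 hi (by omega)) hstrip with
        (⟨hv', -⟩ | ⟨-, hd', -⟩) | ⟨hv₁, -⟩ | ⟨hv₁, -⟩
      · omega
      · exact absurd hd hd'
      · omega
      · omega
    · intro j hj hj1 hj2
      obtain rfl : j = i := h0.injective (by omega) (by omega) (by omega)
      omega
    · intro j hj hj1 hj2
      have := h0.injective (i := j + 1) (j := i) hj (by omega) (by omega)
      obtain rfl : j = s := by omega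
      exact Or.inl hsd
  · refine exists_cleanCompact_pattern_of_erase h0 h1 (t := i) (by omega) rfl ?_ ?_ ?_
    · rintro s hs hs2 hstrip
      by_contra hdot
      push Not at hdot
      have := h0.bounds (i := s) (by omega)
      have hsi := h0.fst_ne (i := s) (j := i) (by omega) (by omega) (by omega)
      have hs1 : s + 2 = i + 1 := by omega
      rw [hs1] at hstrip hdot
      rcases stripPair_of_stripPair_rescale hsi (h0.fst_ne (by omega) (by omega) (by omega))
        hstrip with (⟨hv', hd₁, hd₂⟩ | ⟨hv', -⟩) | ⟨hv₁, hv₂, -⟩ | ⟨hv₁, -⟩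
      · exact hfar ⟨s, hs, by omega, Deco.eq_plus_of_ne hd₁ hdot.1,
          Deco.eq_plus_of_ne hd₂ hdot.2⟩
      · omega
      · omega
      · exact h0.fst_ne (i := s) (j := i + 2) (by omega) hi (by omega) (by omega)
    · intro j hj hj1 hj2
      have := h0.injective (i := j + 1) (j := i + 2) hj hi (by omega)
      obtain rfl : j = i + 1 := by omega
      omega
    · intro j hj hj1 hj2
      obtain rfl : j = i + 2 := h0.injective (by omega) hi (by omega)
      exact Or.inl hr

theorem exists_cleanCompact_pattern_of_decreasing_around_max (h0 : IsPegPermList π)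
    (h1 : CleanCompact π) {i : ℕ} (hi : i + 2 < π.length) (hmax : π⟪i + 1⟫.1 = π.length)
    (hv : π⟪i⟫.1 = π⟪i + 2⟫.1 + 1) (hl : π⟪i⟫.2 = Deco.minus) (hr : π⟪i + 2⟫.2 = Deco.minus) :
    ∃ γ, IsPegPermList γ ∧ CleanCompact γ ∧ γ.length = π.length - 1 ∧ IsPegPattern γ π := by
  have hne₀₁ := h0.fst_ne (i := i) (j := i + 1) (by omega) (by omega) (by omega)
  have hb₀ := h0.bounds (i := i) (by omega)
  by_cases hfar : i + 3 < π.length ∧ π⟪i + 3⟫.1 + 1 = π.length ∧ π⟪i + 3⟫.2 = Deco.minus ∧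
      π⟪i + 1⟫.2 = Deco.minus
  · obtain ⟨hi3, hfv, -, hd⟩ := hfar
    have hne := h0.fst_ne (i := i + 3) (j := i) hi3 (by omega) (by omega)
    refine exists_cleanCompact_pattern_of_erase h0 h1 (t := i) (by omega) rfl ?_ ?_ ?_
    · rintro s hs hs2 hstrip
      have := h0.bounds (i := s) (by omega)
      have hsi := h0.fst_ne (i := s) (j := i) (by omega) (by omega) (by omega)
      rw [show s + 2 = i + 1 by omega] at hstrip
      rcases stripPair_of_stripPair_rescale hsi hne₀₁.symm hstrip with
        (⟨-, -, hd'⟩ | ⟨hv', -⟩) | ⟨hv₁, hv₂, -⟩ | ⟨hv₁, hv₂, -⟩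
      · exact absurd hd hd'
      · omega
      · omega
      · omega
    · intro j hj hj1 hj2
      obtain rfl : j = i + 2 := h0.injective (by omega) hi (by omega)
      exact Or.inl hr
    · intro j hj hj1 hj2
      have := h0.injective (i := j + 1) (j := i + 2) hj hi (by omega)
      obtain rfl : j = i + 1 := by omega
      omega
  · refine exists_cleanCompact_pattern_of_erase h0 h1 hi rfl ?_ ?_ ?_
    · rintro s hs hs2 hstrip
      obtain rfl : s = i + 1 := by omega
      rw [show i + 1 + 2 = i + 3 by omega] at hs2 hstrip ⊢
      by_contra hdot
      push Not at hdot
      have := h0.bounds hs2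
      rcases stripPair_of_stripPair_rescale (h0.fst_ne (by omega) hi (by omega))
        (h0.fst_ne hs2 hi (by omega)) hstrip with
        (⟨hv', -⟩ | ⟨hv', hd₁, hd₂⟩) | ⟨hv₁, -⟩ | ⟨hv₁, -⟩
      · omega
      · exact hfar ⟨hs2, by omega, Deco.eq_minus_of_ne hd₂ hdot.2,
          Deco.eq_minus_of_ne hd₁ hdot.1⟩
      · omega
      · omega
    · intro j hj hj1 hj2
      obtain rfl : i = j + 1 := (h0.injective hj (by omega) (by omega)).symm
      exact Or.inr hl
    · intro j hj hj1 hj2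
      obtain rfl : j = i := h0.injective (by omega) (by omega) (by omega)
      omega

theorem exists_cleanCompact_pattern_of_getD_eq_length (h0 : IsPegPermList π)
    (h1 : CleanCompact π) {t : ℕ} (ht : t < π.length) (hmax : π⟪t⟫.1 = π.length) :
    ∃ γ, IsPegPermList γ ∧ CleanCompact γ ∧ γ.length = π.length - 1 ∧ IsPegPattern γ π := by
  by_cases hrigid : ∃ i, i + 1 = t ∧ i + 2 < π.length ∧ StripPair π⟪i⟫ π⟪i + 2⟫ ∧
      π⟪i⟫.2 ≠ Deco.dot ∧ π⟪i + 2⟫.2 ≠ Deco.dot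
  · obtain ⟨i, rfl, hi, hstrip | hstrip, hl, hr⟩ := hrigid
    · exact exists_cleanCompact_pattern_of_increasing_around_max h0 h1 hi hmax hstrip.1
        (Deco.eq_plus_of_ne hstrip.2.2 hr)
    · exact exists_cleanCompact_pattern_of_decreasing_around_max h0 h1 hi hmax hstrip.1
        (Deco.eq_minus_of_ne hstrip.2.1 hl) (Deco.eq_minus_of_ne hstrip.2.2 hr)
  refine exists_cleanCompact_pattern_of_erase h0 h1 ht hmax (fun s hs hs2 hstrip => ?_)
    (fun i hi _ h => ?_) (fun i hi h _ => ?_)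
  · rw [rescale_of_le (h0.bounds (by omega)).2, rescale_of_le (h0.bounds hs2).2] at hstrip
    by_contra hdot
    push Not at hdot
    exact hrigid ⟨s, hs, hs2, hstrip, hdot⟩
  · exact absurd h (by have := h0.bounds hi; omega)
  · exact absurd h (by have := h0.bounds (i := i) (by omega); omega)

end

theorem cleanCompact_has_cleanCompact_pattern_general (πε : PegPerm) (n : ℕ)
    (hn : πε.length = n)
    (h0 : IsPegPermList πε) (h1 : CleanCompact πε) :
    ∃ γδ : PegPerm, IsPegPermList γδ ∧ CleanCompact γδ ∧ γδ.length = n - 1 ∧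
      IsPegPattern γδ πε := by
  subst hn
  rcases Nat.eq_zero_or_pos πε.length with hnil | hpos
  · rw [List.length_eq_zero_iff] at hnil
    subst hnil
    exact ⟨[], h0, h1, rfl, [], List.Sublist.slnil, ⟨rfl, by simp⟩, by simp⟩
  obtain ⟨t, ht, hmax⟩ := h0.exists_getD_eq hpos le_rfl
  exact exists_cleanCompact_pattern_of_getD_eq_length h0 h1 ht hmax

/-- every clean compact peg permutation of length `n ≥ 2` contains a
clean compact peg pattern of length `n - 1`. -/
theorem cleanCompact_has_cleanCompact_pattern (πε : PegPerm) (n : ℕ)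
    (hn : πε.length = n) (h2 : 2 ≤ n)
    (h0 : IsPegPermList πε) (h1 : CleanCompact πε) :
    ∃ γδ : PegPerm, IsPegPermList γδ ∧ CleanCompact γδ ∧ γδ.length = n - 1 ∧
      IsPegPattern γδ πε :=
  cleanCompact_has_cleanCompact_pattern_general πε n hn h0 h1
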